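/- Let (Ω₁, Λ₁) and (Ω₂, Λ₂) be spectral pairs in dimensions d₁ and d₂, and β : Λ₁ → ℝ^{d₂} any function. Then (Ω₁ × Ω₂, Λ_β) is a spectral pair, where Λ_β = {(λ₁, β(λ₁) + λ₂) : λ₁ ∈ Λ₁, λ₂ ∈ Λ₂}. -/

import Mathlib

open MeasureTheory Complex Set

/-- The exponential `e_λ(x) = e^{i2πλ·x}` on `ℝ^d`. -/
noncomputable def expChar {d : ℕ} (l x : Fin d → ℝ) : ℂ :=
  Complex.exp (2 * Real.pi * Complex.I * ((∑ j, l j * x j : ℝ) : ℂ))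

/-- `(μ, (e_l)_{l ∈ Λ})` is a spectral family: the exponentials indexed by `Λ` are
pairwise orthogonal and total in `L²(μ)`. -/
def IsSpectralFamily {α ι : Type*} [MeasurableSpace α] (μ : Measure α)
    (e : ι → α → ℂ) (Λ : Set ι) : Prop :=
  (∀ l ∈ Λ, ∀ l' ∈ Λ, l ≠ l' → ∫ x, (starRingEnd ℂ) (e l x) * e l' x ∂μ = 0) ∧
  ∀ f : α → ℂ, MemLp f 2 μ →
    (∀ l ∈ Λ, ∫ x, (starRingEnd ℂ) (e l x) * f x ∂μ = 0) → f =ᵐ[μ] 0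

namespace StmtSevenAux

lemma abs_expChar {d : ℕ} (l x : Fin d → ℝ) : ‖expChar l x‖ = 1 := by
  rw [expChar, show (2 * Real.pi * Complex.I * ((∑ j, l j * x j : ℝ) : ℂ))
      = ((2 * Real.pi * (∑ j, l j * x j) : ℝ) : ℂ) * Complex.I by push_cast; ring]
  exact Complex.norm_exp_ofReal_mul_I _

lemma norm_expChar {d : ℕ} (l x : Fin d → ℝ) : ‖expChar l x‖ = 1 := abs_expChar l x

lemma expChar_ne_zero {d : ℕ} (l x : Fin d → ℝ) : expChar l x ≠ 0 := by
  intro h; simpa [h] using abs_expChar l x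

lemma expChar_add {d : ℕ} (l l' x : Fin d → ℝ) :
    expChar (l + l') x = expChar l x * expChar l' x := by
  rw [expChar, expChar, expChar, ← Complex.exp_add]
  congr 1
  push_cast [Finset.sum_add_distrib, add_mul, Pi.add_apply]
  ring

lemma expChar_zero {d : ℕ} (x : Fin d → ℝ) : expChar 0 x = 1 := by
  simp [expChar]

lemma conj_expChar {d : ℕ} (l x : Fin d → ℝ) :
    (starRingEnd ℂ) (expChar l x) = expChar (-l) x := by
  rw [expChar, expChar, ← Complex.exp_conj]
  congr 1
  simp only [map_mul, Complex.conj_I, Complex.conj_ofReal, map_ofNat]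
  push_cast [Finset.sum_neg_distrib, neg_mul, Pi.neg_apply]
  ring

lemma conj_mul_expChar {d : ℕ} (l l' x : Fin d → ℝ) :
    (starRingEnd ℂ) (expChar l x) * expChar l' x = expChar (l' - l) x := by
  rw [conj_expChar, ← expChar_add, neg_add_eq_sub]

lemma continuous_expChar {d : ℕ} (l : Fin d → ℝ) : Continuous (expChar l) := by
  unfold expChar; fun_prop

lemma continuous_expChar_left {d : ℕ} (x : Fin d → ℝ) : Continuous (fun l => expChar l x) := by
  unfold expChar; fun_prop

lemma my_integral_norm_le_sqrt {α E : Type*} [MeasurableSpace α] [NormedAddCommGroup E]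
    {μ : Measure α} [IsFiniteMeasure μ] {g : α → E} (hg : MemLp g 2 μ) :
    ∫ x, ‖g x‖ ∂μ ≤ Real.sqrt ((μ Set.univ).toReal * ∫ x, ‖g x‖ ^ 2 ∂μ) := by
  set C := (μ Set.univ).toReal with hC
  set S := ∫ x, ‖g x‖ ^ 2 ∂μ with hSdef
  have hC0 : 0 ≤ C := ENNReal.toReal_nonneg
  have hS0 : 0 ≤ S := integral_nonneg fun x => sq_nonneg _
  have hint2 : Integrable (fun x => ‖g x‖ ^ 2) μ :=
    (memLp_two_iff_integrable_sq_norm hg.1).mp hg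
  have hint1 : Integrable (fun x => ‖g x‖) μ := (hg.integrable one_le_two).norm
  have key : ∀ t : ℝ, 0 < t → ∫ x, ‖g x‖ ∂μ ≤ t / 2 * C + S / (2 * t) := by
    intro t ht
    have h1 : ∫ x, ‖g x‖ ∂μ ≤ ∫ x, (t / 2 + ‖g x‖ ^ 2 / (2 * t)) ∂μ := by
      refine integral_mono hint1 ((integrable_const _).add (hint2.div_const _)) fun x => ?_
      have h2 := sq_nonneg (‖g x‖ - t)
      rw [div_add_div _ _ (by norm_num : (2:ℝ) ≠ 0) (by positivity : 2 * t ≠ 0),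
        le_div_iff₀ (by positivity)]
      nlinarith
    calc ∫ x, ‖g x‖ ∂μ ≤ ∫ x, (t / 2 + ‖g x‖ ^ 2 / (2 * t)) ∂μ := h1
      _ = t / 2 * C + S / (2 * t) := by
          rw [integral_add (integrable_const _) (hint2.div_const _), integral_const,
            integral_div, smul_eq_mul, mul_comm]; rfl
  rcases eq_or_lt_of_le hC0 with hCz | hCpos
  · have : μ = 0 := by
      have := ENNReal.toReal_eq_zero_iff (μ Set.univ)
      rw [← hC, ← hCz] at this
      rcases this.mp rfl with h | h
      · exact Measure.measure_univ_eq_zero.mp h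
      · exact absurd h (measure_ne_top μ _)
    simp [this, Real.sqrt_nonneg]
  rcases eq_or_lt_of_le hS0 with hSz | hSpos
  · have hle : ∫ x, ‖g x‖ ∂μ ≤ 0 := by
      by_contra hpos
      push_neg at hpos
      set v := ∫ x, ‖g x‖ ∂μ
      have h := key (v / C) (by positivity)
      rw [← hSz] at h
      simp only [zero_div, add_zero] at h
      have : v / C / 2 * C = v / 2 := by field_simp
      rw [this] at h
      linarith
    calc ∫ x, ‖g x‖ ∂μ ≤ 0 := hle
      _ ≤ _ := Real.sqrt_nonneg _
  · set t := Real.sqrt (S / C) with htdef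
    have htpos : 0 < t := Real.sqrt_pos.mpr (by positivity)
    have ht2 : t ^ 2 = S / C := Real.sq_sqrt (by positivity)
    have hsqrt : Real.sqrt (C * S) = t * C := by
      rw [show C * S = (t * C) ^ 2 by field_simp at ht2 ⊢; nlinarith]
      exact Real.sqrt_sq (by positivity)
    rw [hsqrt]
    calc ∫ x, ‖g x‖ ∂μ ≤ t / 2 * C + S / (2 * t) := key t htpos
      _ = t * C := by
          have hS' : S = t ^ 2 * C := by field_simp at ht2 ⊢; linarith [ht2]
          rw [hS']; field_simp; ring

lemma countable_of_orth {d : ℕ} {Ω : Set (Fin d → ℝ)} (hΩ : 0 < volume Ω)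
    (hΩ' : volume Ω < ⊤) {Λ : Set (Fin d → ℝ)}
    (horth : ∀ l ∈ Λ, ∀ l' ∈ Λ, l ≠ l' →
      ∫ x, (starRingEnd ℂ) (expChar l x) * expChar l' x ∂(volume.restrict Ω) = 0) :
    Λ.Countable := by
  set μ := volume.restrict Ω with hμ
  haveI : IsFiniteMeasure μ := ⟨by rw [hμ, Measure.restrict_apply_univ]; exact hΩ'⟩
  set F : (Fin d → ℝ) → ℂ := fun v => ∫ x, expChar v x ∂μ with hF
  have hFcont : Continuous F := by
    apply continuous_of_dominated (bound := fun _ => (1 : ℝ))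
    · exact fun v => (continuous_expChar v).aestronglyMeasurable
    · exact fun v => Filter.Eventually.of_forall fun x => le_of_eq (norm_expChar v x)
    · exact integrable_const 1
    · exact Filter.Eventually.of_forall fun x => continuous_expChar_left x
  have hF0 : F 0 ≠ 0 := by
    have h1 : F 0 = ((volume Ω).toReal : ℂ) := by
      rw [hF]
      simp only [expChar_zero, integral_const, smul_eq_mul, mul_one, Complex.real_smul]
      rw [hμ, Measure.real, Measure.restrict_apply_univ]
    rw [h1]
    simp only [ne_eq, Complex.ofReal_eq_zero]
    exact ne_of_gt (ENNReal.toReal_pos hΩ.ne' hΩ'.ne)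
  obtain ⟨ε, hε, hball⟩ := Metric.isOpen_iff.mp (isOpen_compl_singleton.preimage hFcont) 0 hF0
  have hsep : ∀ a ∈ Λ, ∀ a' ∈ Λ, a ≠ a' → ε ≤ dist a a' := by
    intro a ha a' ha' hne
    by_contra hlt
    push_neg at hlt
    have hmem : a' - a ∈ Metric.ball (0 : Fin d → ℝ) ε := by
      rw [Metric.mem_ball, dist_zero_right, ← dist_eq_norm']
      exact hlt
    have hzero : F (a' - a) = 0 := by
      show ∫ x, expChar (a' - a) x ∂μ = 0
      have heq : ∀ x, expChar (a' - a) x = (starRingEnd ℂ) (expChar a x) * expChar a' x :=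
        fun x => (conj_mul_expChar a a' x).symm
      rw [show (∫ x, expChar (a' - a) x ∂μ)
          = ∫ x, (starRingEnd ℂ) (expChar a x) * expChar a' x ∂μ from
        integral_congr_ae (Filter.Eventually.of_forall heq)]
      exact horth a ha a' ha' hne
    exact (hball hmem) hzero
  apply Set.PairwiseDisjoint.countable_of_isOpen (s := fun a => Metric.ball a (ε / 2))
  · intro a ha a' ha' hne
    exact Metric.ball_disjoint_ball (by linarith [hsep a ha a' ha' hne])
  · exact fun a _ => Metric.isOpen_ball
  · exact fun a _ => Metric.nonempty_ball.mpr (by positivity)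

end StmtSevenAux

open StmtSevenAux

/-- If `(Ω₁, Λ₁)` and `(Ω₂, Λ₂)` are spectral pairs and `β : Λ₁ → ℝ^{d₂}` is any
function, then `(Ω₁ × Ω₂, Λ_β)` is a spectral pair, where
`Λ_β = {(λ₁, β(λ₁) + λ₂) : λ₁ ∈ Λ₁, λ₂ ∈ Λ₂}`. -/
theorem stmt7 (d₁ d₂ : ℕ) (Ω₁ : Set (Fin d₁ → ℝ)) (Ω₂ : Set (Fin d₂ → ℝ))
    (hΩ₁ : 0 < volume Ω₁) (hΩ₁' : volume Ω₁ < ⊤)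
    (hΩ₂ : 0 < volume Ω₂) (hΩ₂' : volume Ω₂ < ⊤)
    (Λ₁ : Set (Fin d₁ → ℝ)) (Λ₂ : Set (Fin d₂ → ℝ))
    (β : (Fin d₁ → ℝ) → (Fin d₂ → ℝ))
    (h₁ : IsSpectralFamily (volume.restrict Ω₁) expChar Λ₁)
    (h₂ : IsSpectralFamily (volume.restrict Ω₂) expChar Λ₂) :
    IsSpectralFamily ((volume.restrict Ω₁).prod (volume.restrict Ω₂))
      (fun l p => expChar l.1 p.1 * expChar l.2 p.2)
      {l : (Fin d₁ → ℝ) × (Fin d₂ → ℝ) |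
        ∃ l₁ ∈ Λ₁, ∃ l₂ ∈ Λ₂, l = (l₁, β l₁ + l₂)} := by
  set μ := volume.restrict Ω₁ with hμdef
  set ν := volume.restrict Ω₂ with hνdef
  haveI : IsFiniteMeasure μ := ⟨by rw [hμdef, Measure.restrict_apply_univ]; exact hΩ₁'⟩
  haveI : IsFiniteMeasure ν := ⟨by rw [hνdef, Measure.restrict_apply_univ]; exact hΩ₂'⟩
  constructor
  · -- orthogonality
    rintro l ⟨a, ha, b, hb, rfl⟩ l' ⟨a', ha', b', hb', rfl⟩ hne
    simp only
    have hre : (fun p : (Fin d₁ → ℝ) × (Fin d₂ → ℝ) =>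
        (starRingEnd ℂ) (expChar a p.1 * expChar (β a + b) p.2) *
          (expChar a' p.1 * expChar (β a' + b') p.2))
        = fun p => ((starRingEnd ℂ) (expChar a p.1) * expChar a' p.1) *
            ((starRingEnd ℂ) (expChar (β a + b) p.2) * expChar (β a' + b') p.2) := by
      funext p; rw [map_mul]; ring
    rw [hre, integral_prod_mul (f := fun x => (starRingEnd ℂ) (expChar a x) * expChar a' x)
      (g := fun y => (starRingEnd ℂ) (expChar (β a + b) y) * expChar (β a' + b') y)]
    by_cases haa' : a = a'
    · subst haa'
      have hbb' : b ≠ b' := by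
        intro h; exact hne (by rw [h])
      have h2 : (∫ y, (starRingEnd ℂ) (expChar (β a + b) y) * expChar (β a + b') y ∂ν)
          = ∫ y, (starRingEnd ℂ) (expChar b y) * expChar b' y ∂ν :=
        integral_congr_ae (Filter.Eventually.of_forall fun y => by
          show (starRingEnd ℂ) (expChar (β a + b) y) * expChar (β a + b') y
              = (starRingEnd ℂ) (expChar b y) * expChar b' y
          rw [conj_mul_expChar, conj_mul_expChar, show β a + b' - (β a + b) = b' - b by abel])
      rw [h2, h₂.1 b hb b' hb' hbb', mul_zero]
    · rw [h₁.1 a ha a' ha' haa', zero_mul]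
  · -- totality
    intro f hf horth
    have hfint : Integrable f (μ.prod ν) := hf.integrable one_le_two
    have hfsq : Integrable (fun p => ‖f p‖ ^ 2) (μ.prod ν) :=
      (memLp_two_iff_integrable_sq_norm hf.1).mp hf
    have hfswap : AEStronglyMeasurable (fun q : (Fin d₂ → ℝ) × (Fin d₁ → ℝ) => f q.swap)
        (ν.prod μ) := hf.1.prod_swap
    set φ : (Fin d₁ → ℝ) → (Fin d₂ → ℝ) → ℂ :=
      fun a y => ∫ x, (starRingEnd ℂ) (expChar a x) * f (x, y) ∂μ with hφdef
    set ψ : (Fin d₂ → ℝ) → ℝ := fun y => ∫ x, ‖f (x, y)‖ ^ 2 ∂μ with hψdef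
    have hψint : Integrable ψ ν := by
      have h := hfsq.integral_norm_prod_right
      refine h.congr (Filter.Eventually.of_forall fun y => ?_)
      exact integral_congr_ae (Filter.Eventually.of_forall fun x => by
        show ‖‖f (x, y)‖ ^ 2‖ = ‖f (x, y)‖ ^ 2
        rw [Real.norm_of_nonneg (sq_nonneg _)])
    set C : ℝ := (μ Set.univ).toReal with hCdef
    set g₀ : (Fin d₂ → ℝ) → ℝ := fun y => Real.sqrt (C * ψ y) with hg₀def
    have hψ0 : ∀ y, 0 ≤ ψ y := fun y => integral_nonneg fun x => sq_nonneg _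
    have hg₀aesm : AEStronglyMeasurable g₀ ν :=
      Real.continuous_sqrt.comp_aestronglyMeasurable (hψint.1.const_mul C)
    have hg₀mem : MemLp g₀ 2 ν := by
      rw [memLp_two_iff_integrable_sq hg₀aesm]
      refine (hψint.const_mul C).congr (Filter.Eventually.of_forall fun y => ?_)
      exact (Real.sq_sqrt (mul_nonneg ENNReal.toReal_nonneg (hψ0 y))).symm
    have hslice_mem : ∀ᵐ y ∂ν, MemLp (fun x => f (x, y)) 2 μ := by
      filter_upwards [hfswap.prodMk_left, hfsq.prod_left_ae] with y h1 h2
      exact (memLp_two_iff_integrable_sq_norm h1).mpr h2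
    -- key step: for each a ∈ Λ₁, φ a vanishes a.e.
    have keyφ : ∀ a ∈ Λ₁, (fun y => φ a y) =ᵐ[ν] 0 := by
      intro a ha
      set G : (Fin d₂ → ℝ) → ℂ := fun y => (starRingEnd ℂ) (expChar (β a) y) * φ a y with hGdef
      have hφaesm : AEStronglyMeasurable (φ a) ν := by
        have hK : AEStronglyMeasurable
            (fun q : (Fin d₂ → ℝ) × (Fin d₁ → ℝ) =>
              (starRingEnd ℂ) (expChar a q.2) * f (q.2, q.1)) (ν.prod μ) := by
          refine AEStronglyMeasurable.mul ?_ hfswap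
          exact (Continuous.comp continuous_star
            ((continuous_expChar a).comp continuous_snd)).aestronglyMeasurable
        exact hK.integral_prod_right'
      have hGaesm : AEStronglyMeasurable G ν :=
        (Continuous.comp continuous_star (continuous_expChar (β a))).aestronglyMeasurable.mul hφaesm
      have hGbound : ∀ᵐ y ∂ν, ‖G y‖ ≤ ‖g₀ y‖ := by
        filter_upwards [hslice_mem] with y hy
        have h1 : ‖G y‖ = ‖φ a y‖ := by
          rw [hGdef]
          simp only [norm_mul, RCLike.norm_conj, norm_expChar, one_mul]
        have h2 : ‖φ a y‖ ≤ ∫ x, ‖f (x, y)‖ ∂μ := by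
          refine (norm_integral_le_integral_norm _).trans_eq ?_
          exact integral_congr_ae (Filter.Eventually.of_forall fun x => by
            simp only [norm_mul, RCLike.norm_conj, norm_expChar, one_mul])
        have h3 : ∫ x, ‖f (x, y)‖ ∂μ ≤ Real.sqrt (C * ψ y) := my_integral_norm_le_sqrt hy
        rw [h1, Real.norm_of_nonneg (Real.sqrt_nonneg _)]
        exact h2.trans h3
      have hGmem : MemLp G 2 ν := hg₀mem.of_le hGaesm hGbound
      have hGorth : ∀ b ∈ Λ₂, ∫ y, (starRingEnd ℂ) (expChar b y) * G y ∂ν = 0 := by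
        intro b hb
        have hmem : ((a, β a + b) : (Fin d₁ → ℝ) × (Fin d₂ → ℝ)) ∈
            {l : (Fin d₁ → ℝ) × (Fin d₂ → ℝ) |
              ∃ l₁ ∈ Λ₁, ∃ l₂ ∈ Λ₂, l = (l₁, β l₁ + l₂)} := ⟨a, ha, b, hb, rfl⟩
        have H0 := horth _ hmem
        simp only at H0
        set K : (Fin d₁ → ℝ) × (Fin d₂ → ℝ) → ℂ :=
          fun p => (starRingEnd ℂ) (expChar a p.1 * expChar (β a + b) p.2) * f p with hKdef
        have hKint : Integrable K (μ.prod ν) := by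
          refine hfint.bdd_mul (c := 1) ?_ (Filter.Eventually.of_forall fun p => ?_)
          · exact (Continuous.comp continuous_star
              (((continuous_expChar a).comp continuous_fst).mul
                ((continuous_expChar (β a + b)).comp continuous_snd))).aestronglyMeasurable
          · simp only [norm_mul, RCLike.norm_conj, norm_expChar, one_mul, le_refl,
              norm_mul, mul_one]
        have H1 : ∫ y, ∫ x, K (x, y) ∂μ ∂ν = 0 := by
          rw [← integral_prod_symm K hKint]
          exact H0
        have H2 : ∀ y, ∫ x, K (x, y) ∂μ = (starRingEnd ℂ) (expChar b y) * G y := by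
          intro y
          have hptw : ∀ x, K (x, y) = (starRingEnd ℂ) (expChar (β a + b) y) *
              ((starRingEnd ℂ) (expChar a x) * f (x, y)) := by
            intro x
            rw [hKdef]
            simp only [map_mul]
            ring
          rw [integral_congr_ae (Filter.Eventually.of_forall hptw), integral_const_mul]
          rw [hGdef, expChar_add, map_mul]
          ring
        rw [show (fun y => ∫ x, K (x, y) ∂μ)
            = fun y => (starRingEnd ℂ) (expChar b y) * G y from funext H2] at H1
        exact H1
      have hG0 : G =ᵐ[ν] 0 := h₂.2 G hGmem hGorth
      filter_upwards [hG0] with y hy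
      rcases mul_eq_zero.mp hy with h | h
      · exact absurd (star_eq_zero.mp h) (expChar_ne_zero (β a) y)
      · exact h
    have hcount : Λ₁.Countable := countable_of_orth hΩ₁ hΩ₁' h₁.1
    have hae1 : ∀ᵐ y ∂ν, ∀ a, a ∈ Λ₁ → φ a y = 0 := by
      rw [ae_ball_iff hcount]
      intro a ha
      filter_upwards [keyφ a ha] with y hy using hy
    have hfzero : ∀ᵐ y ∂ν, (fun x => f (x, y)) =ᵐ[μ] 0 := by
      filter_upwards [hae1, hslice_mem] with y h1y h2y
      exact h₁.2 _ h2y fun a ha => h1y a ha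
    -- conclude
    set g : (Fin d₁ → ℝ) × (Fin d₂ → ℝ) → ℂ := hf.1.mk f with hgdef
    have hgsm : StronglyMeasurable g := hf.1.stronglyMeasurable_mk
    have hfg : f =ᵐ[μ.prod ν] g := hf.1.ae_eq_mk
    have hswapqmp : Filter.Tendsto (Prod.swap : (Fin d₂ → ℝ) × (Fin d₁ → ℝ) →
        (Fin d₁ → ℝ) × (Fin d₂ → ℝ)) (ae (ν.prod μ)) (ae (μ.prod ν)) :=
      (Measure.measurePreserving_swap (μ := ν) (ν := μ)).quasiMeasurePreserving.tendsto_ae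
    have hfg_swap : (fun q : (Fin d₂ → ℝ) × (Fin d₁ → ℝ) => f (q.2, q.1))
        =ᵐ[ν.prod μ] fun q => g (q.2, q.1) := hfg.comp_tendsto hswapqmp
    have hae_g : ∀ᵐ y ∂ν, ∀ᵐ x ∂μ, g (x, y) = 0 := by
      filter_upwards [hfzero, Measure.ae_ae_of_ae_prod hfg_swap] with y h1 h2
      filter_upwards [h1, h2] with x hx1 hx2
      rw [← hx2]; exact hx1
    have hmeasg : Measurable fun q : (Fin d₂ → ℝ) × (Fin d₁ → ℝ) => g (q.2, q.1) :=
      hgsm.measurable.comp (measurable_snd.prodMk measurable_fst)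
    have hs : MeasurableSet {q : (Fin d₂ → ℝ) × (Fin d₁ → ℝ) | g (q.2, q.1) ≠ 0} :=
      (hmeasg (measurableSet_singleton 0)).compl
    have hs0 : (ν.prod μ) {q : (Fin d₂ → ℝ) × (Fin d₁ → ℝ) | g (q.2, q.1) ≠ 0} = 0 := by
      rw [Measure.measure_prod_null hs]
      filter_upwards [hae_g] with y hy
      have : (Prod.mk y ⁻¹' {q : (Fin d₂ → ℝ) × (Fin d₁ → ℝ) | g (q.2, q.1) ≠ 0})
          = {x | g (x, y) ≠ 0} := rfl
      rw [this]
      simpa [ae_iff] using hy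
    have hswap0 : ∀ᵐ q ∂(ν.prod μ), g (q.2, q.1) = 0 := by
      rw [ae_iff]
      exact hs0
    have hg0 : g =ᵐ[μ.prod ν] 0 := by
      have := hswap0.filter_mono (le_refl _)
      have hswapqmp2 : Filter.Tendsto (Prod.swap : (Fin d₁ → ℝ) × (Fin d₂ → ℝ) →
          (Fin d₂ → ℝ) × (Fin d₁ → ℝ)) (ae (μ.prod ν)) (ae (ν.prod μ)) :=
        (Measure.measurePreserving_swap (μ := μ) (ν := ν)).quasiMeasurePreserving.tendsto_ae
      have hcomp : ∀ᵐ z ∂(μ.prod ν), g ((Prod.swap z).2, (Prod.swap z).1) = 0 :=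
        hswapqmp2.eventually hswap0
      filter_upwards [hcomp] with z hz
      exact hz
    exact hfg.trans hg0
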